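/- The univariate function η̃_{2M}(x) = π^{-1/2} L_{M-1}^{(1/2)}(x²) e^{-x²} satisfies the moment conditions of order 2M: ∫_ℝ η̃_{2M}(x) dx = 1 and ∫_ℝ η̃_{2M}(x) x^k dx = 0 for all integers k with 1 ≤ k ≤ 2M − 1. -/

import Mathlib

open MeasureTheory

noncomputable def genLaguerre (k : ℕ) (γ : ℝ) (y : ℝ) : ℝ :=
  (Real.exp y * y ^ (-γ) / (Nat.factorial k)) *
    iteratedDeriv k (fun z => Real.exp (-z) * z ^ ((k : ℝ) + γ)) y

noncomputable def etaTilde (M : ℕ) (x : ℝ) : ℝ :=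
  (Real.sqrt Real.pi)⁻¹ * genLaguerre (M - 1) (1/2) (x ^ 2) * Real.exp (-x ^ 2)

open Set Filter Polynomial Topology Real
open scoped Nat

/-!
By Rodrigues' formula, `(d/dt)^m (e^{-t} t^β) = e^{-t} t^{β-m} Q_m(t)` for polynomials `Q_m`
(`rodriguesPoly β m`), so `L_n^{(γ)} = Q_n / n!` with `β = n + γ`. One integration by parts
lowers `m`: `∫₀^∞ e^{-t} t^d Q_{m+1} = (β - m - d - 1) ∫₀^∞ e^{-t} t^d Q_m`, hence
`∫₀^∞ e^{-t} t^d Q_n = (β-d-1)(β-d-2)⋯(β-d-n) Γ(d+1)`, a falling factorial.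
After `t = x²`, the moment `∫ η̃ x^{2j}` is this with `β = n + 1/2`, `d = j - 1/2`, which
gives the falling factorial `(n - j)(n - j - 1)⋯(1 - j)`: it equals `n!` for `j = 0` and vanishes
for `1 ≤ j ≤ n`. Odd moments vanish because `η̃` is even.
-/

noncomputable def expRpowPoly (c : ℝ) (p : ℝ[X]) (t : ℝ) : ℝ :=
  exp (-t) * t ^ c * p.eval t

lemma expRpowPoly_eq_sum (c : ℝ) (p : ℝ[X]) {t : ℝ} (ht : 0 < t) :
    expRpowPoly c p t =
      ∑ i ∈ Finset.range (p.natDegree + 1), p.coeff i * (exp (-t) * t ^ (c + i)) := by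
  simp only [expRpowPoly, eval_eq_sum_range, Finset.mul_sum, rpow_add ht, rpow_natCast]
  exact Finset.sum_congr rfl fun i _ => by ring

lemma integrableOn_expRpowPoly {c : ℝ} (hc : -1 < c) (p : ℝ[X]) :
    IntegrableOn (expRpowPoly c p) (Ioi 0) := by
  refine IntegrableOn.congr_fun ?_ (fun t ht => (expRpowPoly_eq_sum c p ht).symm)
    measurableSet_Ioi
  refine integrable_finsetSum _ fun i _ => Integrable.const_mul ?_ _
  have := GammaIntegral_convergent (s := c + i + 1)
    (by linarith [(Nat.cast_nonneg i : (0 : ℝ) ≤ i)])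
  rwa [add_sub_cancel_right] at this

lemma tendsto_expRpowPoly_atTop (c : ℝ) (p : ℝ[X]) :
    Tendsto (expRpowPoly c p) atTop (𝓝 0) := by
  refine Tendsto.congr' (EventuallyEq.symm ?_) (f₁ := fun t =>
    ∑ i ∈ Finset.range (p.natDegree + 1), p.coeff i * (exp (-t) * t ^ (c + i))) ?_
  · filter_upwards [eventually_gt_atTop 0] with t ht using expRpowPoly_eq_sum c p ht
  · rw [← Finset.sum_const_zero]
    refine tendsto_finsetSum _ fun i _ => ?_
    rw [← mul_zero (p.coeff i)]
    refine Tendsto.const_mul _ ?_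
    simpa [mul_comm] using tendsto_rpow_mul_exp_neg_mul_atTop_nhds_zero (c + i) 1 one_pos

lemma continuous_expRpowPoly {c : ℝ} (hc : 0 ≤ c) (p : ℝ[X]) :
    Continuous (expRpowPoly c p) := by
  unfold expRpowPoly
  have := continuous_rpow_const hc
  fun_prop

lemma expRpowPoly_zero {c : ℝ} (hc : c ≠ 0) (p : ℝ[X]) : expRpowPoly c p 0 = 0 := by
  simp [expRpowPoly, zero_rpow hc]

noncomputable def rodriguesStep (c : ℝ) (p : ℝ[X]) : ℝ[X] :=
  C c * p + X * (derivative p - p)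

lemma hasDerivAt_expRpowPoly (c : ℝ) (p : ℝ[X]) {t : ℝ} (ht : 0 < t) :
    HasDerivAt (expRpowPoly c p) (expRpowPoly (c - 1) (rodriguesStep c p) t) t := by
  have hexp : HasDerivAt (fun t => exp (-t)) (-exp (-t)) t := by
    simpa using (hasDerivAt_neg t).exp
  refine ((hexp.mul (hasDerivAt_rpow_const (p := c) (Or.inl ht.ne'))).mul
    (p.hasDerivAt t)).congr_deriv ?_
  have : t ^ c = t ^ (c - 1) * t := by rw [← rpow_add_one ht.ne', sub_add_cancel]
  simp only [expRpowPoly, rodriguesStep, eval_add, eval_mul, eval_C, eval_X, eval_sub,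
    Pi.mul_apply, this]
  ring

lemma integral_expRpowPoly_rodriguesStep {d : ℝ} (hd : -1 < d) (c : ℝ) (p : ℝ[X]) :
    ∫ t in Ioi 0, expRpowPoly d (rodriguesStep c p) t =
      (c - d - 1) * ∫ t in Ioi 0, expRpowPoly d p t := by
  have hsplit : rodriguesStep c p = C (c - d - 1) * p + rodriguesStep (d + 1) p := by
    simp only [rodriguesStep, C_sub, C_add, C_1]; ring
  have hexact : ∫ t in Ioi 0, expRpowPoly d (rodriguesStep (d + 1) p) t = 0 := by
    have hpos : 0 < d + 1 := by linarith
    have := integral_Ioi_of_hasDerivAt_of_tendsto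
      (continuous_expRpowPoly hpos.le p).continuousWithinAt
      (fun t ht => by simpa using hasDerivAt_expRpowPoly (d + 1) p ht)
      (integrableOn_expRpowPoly hd _) (tendsto_expRpowPoly_atTop (d + 1) p)
    rwa [expRpowPoly_zero hpos.ne', sub_zero] at this
  have hlin : expRpowPoly d (rodriguesStep c p) =
      fun t => (c - d - 1) * expRpowPoly d p t + expRpowPoly d (rodriguesStep (d + 1) p) t := by
    ext t; simp only [hsplit, expRpowPoly, eval_add, eval_mul, eval_C]; ring
  rw [hlin, integral_add ((integrableOn_expRpowPoly hd p).const_mul _)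
    (integrableOn_expRpowPoly hd _), integral_const_mul, hexact, add_zero]

noncomputable def rodriguesPoly (β : ℝ) : ℕ → ℝ[X]
  | 0 => 1
  | m + 1 => rodriguesStep (β - m) (rodriguesPoly β m)

lemma iteratedDeriv_exp_neg_mul_rpow (β : ℝ) (m : ℕ) {t : ℝ} (ht : 0 < t) :
    iteratedDeriv m (fun z => exp (-z) * z ^ β) t =
      expRpowPoly (β - m) (rodriguesPoly β m) t := by
  induction m generalizing t with
  | zero => simp [expRpowPoly, rodriguesPoly]
  | succ m ih =>
    have hloc : iteratedDeriv m (fun z => exp (-z) * z ^ β) =ᶠ[𝓝 t]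
        expRpowPoly (β - m) (rodriguesPoly β m) :=
      eventually_of_mem (Ioi_mem_nhds ht) fun y hy => ih hy
    rw [iteratedDeriv_succ, hloc.deriv_eq, (hasDerivAt_expRpowPoly _ _ ht).deriv]
    push_cast
    rw [sub_add_eq_sub_sub, rodriguesPoly]

lemma genLaguerre_eq_eval_rodriguesPoly (n : ℕ) (γ : ℝ) {y : ℝ} (hy : 0 < y) :
    genLaguerre n γ y = (rodriguesPoly (n + γ) n).eval y / (n ! : ℝ) := by
  rw [genLaguerre, iteratedDeriv_exp_neg_mul_rpow _ _ hy, expRpowPoly, add_sub_cancel_left,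
    rpow_neg hy.le]
  rw [exp_neg]
  field_simp

lemma integral_expRpowPoly_rodriguesPoly (β : ℝ) (m : ℕ) {d : ℝ} (hd : -1 < d) :
    ∫ t in Ioi 0, expRpowPoly d (rodriguesPoly β m) t =
      (descPochhammer ℝ m).eval (β - d - 1) * Gamma (d + 1) := by
  induction m with
  | zero =>
    simp only [rodriguesPoly, expRpowPoly, eval_one, mul_one, descPochhammer_zero, one_mul]
    rw [Gamma_eq_integral (by linarith), add_sub_cancel_right]
  | succ m ih =>
    rw [rodriguesPoly, integral_expRpowPoly_rodriguesStep hd, ih, descPochhammer_succ_right,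
      eval_mul, eval_sub, eval_X, eval_natCast]
    ring

lemma Function.Odd.integral_eq_zero {G E : Type*} [MeasurableSpace G] [AddGroup G]
    [MeasurableNeg G] [NormedAddCommGroup E] [NormedSpace ℝ E] {μ : Measure G}
    [μ.IsNegInvariant] {f : G → E} (hf : f.Odd) : ∫ x, f x ∂μ = 0 := by
  have h := integral_neg_eq_self f μ
  simp only [hf.eq, integral_neg] at h
  have htwice : (2 : ℝ) • ∫ x, f x ∂μ = 0 := by
    rw [two_smul]; nth_rewrite 1 [← h]; exact neg_add_cancel _
  exact (smul_eq_zero.mp htwice).resolve_left two_ne_zero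

lemma integral_Ioi_exp_neg_sq_mul_pow_mul_eval (j : ℕ) (p : ℝ[X]) :
    ∫ x in Ioi 0, exp (-x ^ 2) * x ^ (2 * j) * p.eval (x ^ 2) =
      2⁻¹ * ∫ t in Ioi 0, expRpowPoly (j - 1 / 2) p t := by
  rw [← integral_comp_rpow_Ioi (expRpowPoly (j - 1 / 2) p) two_ne_zero,
    ← integral_const_mul]
  refine setIntegral_congr_fun measurableSet_Ioi fun x (hx : 0 < x) => ?_
  have hpow : (x ^ (2 : ℝ)) ^ ((j : ℝ) - 1 / 2) * x = x ^ (2 * j) := by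
    rw [← rpow_mul hx.le, ← rpow_add_one hx.ne', ← rpow_natCast]
    push_cast; ring_nf
  simp only [expRpowPoly, smul_eq_mul, rpow_two, abs_two, ← hpow]
  norm_num
  ring

lemma etaTilde_neg (M : ℕ) (x : ℝ) : etaTilde M (-x) = etaTilde M x := by
  simp [etaTilde]

lemma etaTilde_eq (M : ℕ) {x : ℝ} (hx : x ≠ 0) :
    etaTilde M x = (√π * (M - 1)!)⁻¹ *
      (exp (-x ^ 2) * (rodriguesPoly ((M - 1 : ℕ) + 1 / 2) (M - 1)).eval (x ^ 2)) := by
  rw [etaTilde, genLaguerre_eq_eval_rodriguesPoly _ _ (by positivity)]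
  ring

lemma integral_etaTilde_mul_pow_two_mul (M j : ℕ) :
    ∫ x, etaTilde M x * x ^ (2 * j) =
      (descPochhammer ℝ (M - 1)).eval ((M - 1 : ℕ) - j : ℝ) * Gamma (j + 1 / 2) /
        (√π * (M - 1)!) := by
  have hj : (-1 : ℝ) < j - 1 / 2 := by linarith [(Nat.cast_nonneg j : (0 : ℝ) ≤ j)]
  calc ∫ x, etaTilde M x * x ^ (2 * j)
      = ∫ x, etaTilde M |x| * |x| ^ (2 * j) := by
        congr 1 with x
        rcases abs_choice x with h | h <;> simp [h, etaTilde_neg, pow_mul]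
    _ = 2 * ∫ x in Ioi 0, (√π * (M - 1)!)⁻¹ * (exp (-x ^ 2) * x ^ (2 * j) *
          (rodriguesPoly ((M - 1 : ℕ) + 1 / 2) (M - 1)).eval (x ^ 2)) := by
        rw [integral_comp_abs (f := fun x => etaTilde M x * x ^ (2 * j))]
        congr 1
        refine setIntegral_congr_fun measurableSet_Ioi fun x (hx : 0 < x) => ?_
        simp only [etaTilde_eq M hx.ne']
        ring
    _ = _ := by
        rw [integral_const_mul, integral_Ioi_exp_neg_sq_mul_pow_mul_eval,
          integral_expRpowPoly_rodriguesPoly _ _ hj]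
        ring_nf

theorem stmt9_general (M : ℕ) :
    (∫ x : ℝ, etaTilde M x) = 1 ∧
      ∀ k : ℕ, 1 ≤ k → k ≤ 2 * M - 1 → (∫ x : ℝ, etaTilde M x * x ^ k) = 0 := by
  constructor
  · have h := integral_etaTilde_mul_pow_two_mul M 0
    rw [Nat.cast_zero, sub_zero, descPochhammer_eval_eq_descFactorial, Nat.descFactorial_self,
      zero_add, Gamma_one_half_eq] at h
    simp only [mul_zero, pow_zero, mul_one] at h
    rw [h]
    field_simp
  · intro k hk1 hk2
    rcases Nat.even_or_odd k with ⟨j, rfl⟩ | hk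
    · rw [← two_mul, integral_etaTilde_mul_pow_two_mul, ← Nat.cast_sub (by omega),
        descPochhammer_eval_coe_nat_of_lt (by omega), zero_mul, zero_div]
    · exact (Function.Even.mul_odd (etaTilde_neg M) hk.neg_pow).integral_eq_zero

theorem stmt9 (M : ℕ) (hM : 1 ≤ M) :
    (∫ x : ℝ, etaTilde M x) = 1 ∧
      ∀ k : ℕ, 1 ≤ k → k ≤ 2 * M - 1 → (∫ x : ℝ, etaTilde M x * x ^ k) = 0 :=
  stmt9_general M
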